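/- Let μ and ν be probability measures on a measurable space, both absolutely continuous with respect to a σ-finite measure μ₀, and let f be a measurable real-valued function that is square-integrable with respect to both μ and ν. Then |∫ f dμ − ∫ f dν| ≤ 2·(∫ f² dμ + ∫ f² dν)^{1/2}·d_Hell(μ, ν). -/

import Mathlib

open MeasureTheory Real

/-- The Hellinger distance between `μ` and `ν`, both absolutely continuous with
respect to the reference measure `μ₀`, computed via Radon–Nikodym derivatives. -/
noncomputable def dHell {X : Type*} [MeasurableSpace X] (μ₀ μ ν : Measure X) : ℝ :=
  Real.sqrt ((1 / 2) * ∫ u,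
    (Real.sqrt ((μ.rnDeriv μ₀ u).toReal) - Real.sqrt ((ν.rnDeriv μ₀ u).toReal)) ^ 2 ∂μ₀)

/-!
Write `p = dμ/dμ₀` and `q = dν/dμ₀`. Then `∫ f dμ - ∫ f dν = ∫ f (√p + √q) (√p - √q) dμ₀`, and
Cauchy–Schwarz bounds this by `‖f (√p + √q)‖₂ ‖√p - √q‖₂`. The second factor is `√2 · d_Hell`,
and `(√p + √q)² ≤ 2 (p + q)` bounds the square of the first by `2 (∫ f² dμ + ∫ f² dν)`.
-/

namespace Real

variable {a b : ℝ}

theorem sub_eq_sqrt_add_sqrt_mul_sqrt_sub (ha : 0 ≤ a) (hb : 0 ≤ b) :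
    a - b = (√a + √b) * (√a - √b) := by
  nlinarith [sq_sqrt ha, sq_sqrt hb]

theorem sqrt_add_sqrt_sq_le (ha : 0 ≤ a) (hb : 0 ≤ b) : (√a + √b) ^ 2 ≤ 2 * (a + b) := by
  simpa only [sq_sqrt ha, sq_sqrt hb] using add_sq_le (a := √a) (b := √b)

theorem sqrt_sub_sqrt_sq_le (ha : 0 ≤ a) (hb : 0 ≤ b) : (√a - √b) ^ 2 ≤ a + b := by
  nlinarith [sq_sqrt ha, sq_sqrt hb, mul_nonneg (sqrt_nonneg a) (sqrt_nonneg b)]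

end Real

namespace MeasureTheory

variable {α : Type*} [MeasurableSpace α]

theorem abs_integral_mul_le_sqrt_mul_sqrt {μ : Measure α} {g h : α → ℝ}
    (hg : MemLp g 2 μ) (hh : MemLp h 2 μ) :
    |∫ x, g x * h x ∂μ| ≤ √(∫ x, g x ^ 2 ∂μ) * √(∫ x, h x ^ 2 ∂μ) := by
  have holder := integral_mul_norm_le_Lp_mul_Lq Real.HolderConjugate.two_two
    (by simpa only [ENNReal.ofReal_ofNat] using hg) (by simpa only [ENNReal.ofReal_ofNat] using hh)
  simp only [norm_eq_abs, rpow_two, sq_abs, ← sqrt_eq_rpow] at holder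
  calc |∫ x, g x * h x ∂μ| ≤ ∫ x, |g x| * |h x| ∂μ := by
        simpa only [abs_mul] using abs_integral_le_integral_abs (f := fun x => g x * h x)
    _ ≤ _ := holder

theorem abs_integral_sub_mul_le_sqrt_mul_sqrt {μ₀ : Measure α} {p q f : α → ℝ}
    (hp0 : 0 ≤ p) (hq0 : 0 ≤ q) (hpm : Measurable p) (hqm : Measurable q) (hfm : Measurable f)
    (hp : Integrable p μ₀) (hq : Integrable q μ₀)
    (hpqf : Integrable (fun x => (p x + q x) * f x ^ 2) μ₀) :
    |∫ x, (p x - q x) * f x ∂μ₀|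
      ≤ √(2 * ∫ x, (p x + q x) * f x ^ 2 ∂μ₀) * √(∫ x, (√(p x) - √(q x)) ^ 2 ∂μ₀) := by
  set g : α → ℝ := fun x => f x * (√(p x) + √(q x))
  set h : α → ℝ := fun x => √(p x) - √(q x)
  have hg_sq_le (x : α) : g x ^ 2 ≤ 2 * ((p x + q x) * f x ^ 2) := by
    have := mul_le_mul_of_nonneg_left (sqrt_add_sqrt_sq_le (hp0 x) (hq0 x)) (sq_nonneg (f x))
    simp only [g]
    linarith
  have hgm : Measurable g := hfm.mul (hpm.sqrt.add hqm.sqrt)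
  have hhm : Measurable h := hpm.sqrt.sub hqm.sqrt
  have hg_sq : Integrable (fun x => g x ^ 2) μ₀ :=
    (hpqf.const_mul 2).mono' (hgm.pow_const 2).aestronglyMeasurable
      (.of_forall fun x => by simpa only [norm_pow, norm_eq_abs, sq_abs] using hg_sq_le x)
  have hh_sq : Integrable (fun x => h x ^ 2) μ₀ :=
    (hp.add hq).mono' (hhm.pow_const 2).aestronglyMeasurable (.of_forall fun x => by
      simpa only [norm_pow, norm_eq_abs, sq_abs, Pi.add_apply]
        using sqrt_sub_sqrt_sq_le (hp0 x) (hq0 x))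
  have hg : MemLp g 2 μ₀ := (memLp_two_iff_integrable_sq hgm.aestronglyMeasurable).2 hg_sq
  have hh : MemLp h 2 μ₀ := (memLp_two_iff_integrable_sq hhm.aestronglyMeasurable).2 hh_sq
  have factor : (fun x => (p x - q x) * f x) = fun x => g x * h x := by
    ext x
    rw [sub_eq_sqrt_add_sqrt_mul_sqrt_sub (hp0 x) (hq0 x)]
    ring
  calc |∫ x, (p x - q x) * f x ∂μ₀| ≤ √(∫ x, g x ^ 2 ∂μ₀) * √(∫ x, h x ^ 2 ∂μ₀) := by
        rw [factor]
        exact abs_integral_mul_le_sqrt_mul_sqrt hg hh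
    _ ≤ _ := by
        gcongr
        rw [← integral_const_mul]
        exact integral_mono hg_sq (hpqf.const_mul 2) hg_sq_le

theorem integral_sub_integral_eq_integral_rnDeriv_sub_mul {μ₀ μ ν : Measure α}
    [SigmaFinite μ₀] [SigmaFinite μ] [SigmaFinite ν] (hμ : μ ≪ μ₀) (hν : ν ≪ μ₀) {f : α → ℝ}
    (hfμ : Integrable f μ) (hfν : Integrable f ν) :
    (∫ x, f x ∂μ) - ∫ x, f x ∂ν
      = ∫ x, ((μ.rnDeriv μ₀ x).toReal - (ν.rnDeriv μ₀ x).toReal) * f x ∂μ₀ := by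
  simp only [sub_mul]
  rw [integral_sub ((integrable_toReal_rnDeriv_mul_iff hμ).2 hfμ)
    ((integrable_toReal_rnDeriv_mul_iff hν).2 hfν), integral_toReal_rnDeriv_mul hμ,
    integral_toReal_rnDeriv_mul hν]

end MeasureTheory

/-- Hellinger distance controls differences of expectations of square-integrable
functionals. -/
theorem abs_integral_sub_le_hellinger {X : Type*} [MeasurableSpace X]
    (μ₀ μ ν : Measure X) [SigmaFinite μ₀]
    [IsProbabilityMeasure μ] [IsProbabilityMeasure ν]
    (hμ : μ ≪ μ₀) (hν : ν ≪ μ₀)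
    (f : X → ℝ) (hfm : Measurable f)
    (hf2μ : Integrable (fun x => f x ^ 2) μ)
    (hf2ν : Integrable (fun x => f x ^ 2) ν) :
    |(∫ x, f x ∂μ) - ∫ x, f x ∂ν|
      ≤ 2 * Real.sqrt ((∫ x, f x ^ 2 ∂μ) + ∫ x, f x ^ 2 ∂ν) * dHell μ₀ μ ν := by
  have integrable_of_sq {ρ : Measure X} [IsFiniteMeasure ρ] (h : Integrable (fun x => f x ^ 2) ρ) :
      Integrable f ρ :=
    ((memLp_two_iff_integrable_sq hfm.aestronglyMeasurable).2 h).integrable one_le_two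
  have hpf2 := (integrable_toReal_rnDeriv_mul_iff hμ).2 hf2μ
  have hqf2 := (integrable_toReal_rnDeriv_mul_iff hν).2 hf2ν
  have second_moment : ∫ x, ((μ.rnDeriv μ₀ x).toReal + (ν.rnDeriv μ₀ x).toReal) * f x ^ 2 ∂μ₀
      = (∫ x, f x ^ 2 ∂μ) + ∫ x, f x ^ 2 ∂ν := by
    simp only [add_mul]
    rw [integral_add hpf2 hqf2, integral_toReal_rnDeriv_mul hμ, integral_toReal_rnDeriv_mul hν]
  have hpqf2 : Integrable
      (fun x => ((μ.rnDeriv μ₀ x).toReal + (ν.rnDeriv μ₀ x).toReal) * f x ^ 2) μ₀ := by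
    simp only [add_mul]
    exact hpf2.add hqf2
  rw [integral_sub_integral_eq_integral_rnDeriv_sub_mul hμ hν (integrable_of_sq hf2μ)
    (integrable_of_sq hf2ν)]
  refine (abs_integral_sub_mul_le_sqrt_mul_sqrt (fun _ => ENNReal.toReal_nonneg)
    (fun _ => ENNReal.toReal_nonneg) (Measure.measurable_rnDeriv μ μ₀).ennreal_toReal
    (Measure.measurable_rnDeriv ν μ₀).ennreal_toReal hfm Measure.integrable_toReal_rnDeriv
    Measure.integrable_toReal_rnDeriv hpqf2).trans_eq ?_
  rw [second_moment, dHell, sqrt_mul zero_le_two, sqrt_mul (by norm_num), one_div, sqrt_inv]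
  field_simp
  rw [sq_sqrt zero_le_two]
  ring
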